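/- Let A be a real n×m matrix with n < m and full row rank (so AAᵀ is invertible), let b ∈ ℝ^n, and suppose x* is a minimizer of ‖·‖₀ over {x ∈ ℝ^m : Ax = b} with t = ‖x*‖₀ ≥ 1, and that every nonzero x ∈ Ker(A) satisfies ‖x‖₀ ≥ 2t+1. Let 0 < u ≤ w be constants such that u‖z‖₂ ≤ ‖Az‖₂ ≤ w‖z‖₂ for every z ∈ ℝ^m with ‖z‖₀ ≤ 2t, and set λ = w²/u², C = ((√2+1)/2)·[ (λ−1)(m−3)/2 + λ + √(1/2) ], h(x) = (ln(x+1) − ln x)/ln C, S* = ‖Aᵀ(AAᵀ)⁻¹b‖₀, and p*(A,b) = max{ h(S*), h(⌊(2m−5)/4⌋ + 1) }. Then for every p with 0 < p < p*(A,b) and p ≤ 1, x* is the unique minimizer of ‖·‖_p^p over {x ∈ ℝ^m : Ax = b}; that is, every y ≠ x* with Ay = b satisfies ‖x*‖_p^p < ‖y‖_p^p. -/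

import Mathlib

/-!
Write `y = x* + v` with `v ∈ Ker A`, and let `T` be the support of `x*`. As `‖v‖₀ ≥ 2t + 1`, `v` has
at least `t + 1` nonzero entries off `T`; let `S` carry the `t` largest of them and `μ` be the next
one. Polarization makes `A` nearly orthogonal on disjoint vectors of joint sparsity `2t`, so
`A v = 0` pits `A v_{T ∪ S}` against the small tail of `v` and bounds every entry of `v` on `T`
by `C μ`. For `p < p*` we have `t Cᵖ < t + 1`: in `‖·‖_p^p`, `y` loses at most `t (C μ)ᵖ` on `T`
but gains at least `(t + 1) μᵖ` on `S` and the next entry.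
-/

/-- The number of nonzero entries of a vector (the "l0-norm"). -/
noncomputable def l0norm {m : ℕ} (x : Fin m → ℝ) : ℕ :=
  (Finset.univ.filter (fun i => x i ≠ 0)).card

/-- The Euclidean norm of a vector in `ℝ^k`. -/
noncomputable def l2norm {k : ℕ} (x : Fin k → ℝ) : ℝ :=
  Real.sqrt (∑ i, (x i) ^ 2)

open Matrix Finset

def RestrictedFrame {n m : ℕ} (A : Matrix (Fin n) (Fin m) ℝ) (s : ℕ) (u w : ℝ) : Prop :=
  ∀ z : Fin m → ℝ, l0norm z ≤ s →
    u * l2norm z ≤ l2norm (A *ᵥ z) ∧ l2norm (A *ᵥ z) ≤ w * l2norm z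

section Norms

variable {m : ℕ}

theorem l0norm_le_card_of_support_subset {x : Fin m → ℝ} {F : Finset (Fin m)}
    (h : ∀ i, x i ≠ 0 → i ∈ F) : l0norm x ≤ F.card :=
  card_le_card fun i hi => h i (mem_filter.1 hi).2

theorem l0norm_le (x : Fin m → ℝ) : l0norm x ≤ m :=
  (card_filter_le _ _).trans (card_fin m).le

theorem l0norm_smul_add_smul_le (a b : ℝ) (x y : Fin m → ℝ) :
    l0norm (a • x + b • y) ≤ l0norm x + l0norm y := by
  refine (l0norm_le_card_of_support_subset fun i hi => ?_).trans (card_union_le _ _)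
  by_contra! h
  simp_all

theorem l0norm_single_le (i : Fin m) (c : ℝ) : l0norm (Pi.single i c) ≤ 1 :=
  (l0norm_le_card_of_support_subset (F := {i}) fun j hj => by
    by_contra h
    exact hj (by simp [show j ≠ i by simpa using h])).trans (card_singleton i).le

theorem l0norm_indicator_le (F : Finset (Fin m)) (v : Fin m → ℝ) :
    l0norm ((F : Set (Fin m)).indicator v) ≤ F.card :=
  l0norm_le_card_of_support_subset fun i hi => by
    by_contra h
    exact hi (Set.indicator_of_notMem (by simpa using h) v)

theorem l2norm_nonneg (x : Fin m → ℝ) : 0 ≤ l2norm x := Real.sqrt_nonneg _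

theorem l2norm_sq (x : Fin m → ℝ) : l2norm x ^ 2 = x ⬝ᵥ x := by
  rw [l2norm, Real.sq_sqrt (sum_nonneg fun i _ => sq_nonneg _)]
  simp only [dotProduct, sq]

theorem l2norm_eq_zero {x : Fin m → ℝ} : l2norm x = 0 ↔ x = 0 := by
  rw [← pow_eq_zero_iff two_ne_zero, l2norm_sq, dotProduct_self_eq_zero]

theorem abs_le_l2norm (x : Fin m → ℝ) (i : Fin m) : |x i| ≤ l2norm x := by
  rw [← Real.sqrt_sq_eq_abs]
  exact Real.sqrt_le_sqrt (single_le_sum (fun j _ => sq_nonneg (x j)) (mem_univ i))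

theorem l2norm_single (i : Fin m) (c : ℝ) : l2norm (Pi.single i c) = |c| := by
  rw [← Real.sqrt_sq_eq_abs, l2norm]
  congr 1
  rw [sum_eq_single i (fun j _ hj => by simp [hj]) (by simp)]
  simp

theorem sum_abs_indicator_compl_le {F : Finset (Fin m)} {v : Fin m → ℝ} {μ : ℝ}
    (hμ : ∀ j ∉ F, |v j| ≤ μ) :
    ∑ j, |(F : Set (Fin m))ᶜ.indicator v j| ≤ ((m : ℝ) - F.card) * μ :=
  calc ∑ j, |(F : Set (Fin m))ᶜ.indicator v j| = ∑ j ∈ Fᶜ, |(F : Set (Fin m))ᶜ.indicator v j| :=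
        (sum_subset (subset_univ _) fun j _ hj => by simp_all).symm
    _ ≤ Fᶜ.card • μ := sum_le_card_nsmul _ _ _ fun j hj => by
        simpa [(mem_compl.1 hj)] using hμ j (mem_compl.1 hj)
    _ = ((m : ℝ) - F.card) * μ := by
        rw [card_compl, nsmul_eq_mul, Fintype.card_fin,
          Nat.cast_sub (by simpa using card_le_univ F)]

theorem dotProduct_eq_zero_of_disjoint {x y : Fin m → ℝ} (h : ∀ i, x i = 0 ∨ y i = 0) :
    x ⬝ᵥ y = 0 :=
  sum_eq_zero fun i _ => by rcases h i with h | h <;> simp [h]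

end Norms

/-- `(x, y)` lies in the disc of radius `g / √2` centred at `(g / 2, g / 2)`. -/
theorem le_of_sq_add_sq_le_mul_add {x y g : ℝ} (hg : 0 ≤ g)
    (h : x ^ 2 + y ^ 2 ≤ g * (x + y)) : x ≤ (√2 + 1) / 2 * g := by
  have hs : √2 ^ 2 = 2 := Real.sq_sqrt zero_le_two
  have hdisc : (x - g / 2) ^ 2 ≤ (√2 / 2 * g) ^ 2 := by
    nlinarith [sq_nonneg (y - g / 2)]
  have := (abs_le_of_sq_le_sq' hdisc (by positivity)).2
  linarith

theorem one_le_sq_div_sq {u w : ℝ} (hu : 0 < u) (huw : u ≤ w) : 1 ≤ w ^ 2 / u ^ 2 :=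
  (one_le_div (by positivity)).2 (by gcongr)

namespace RestrictedFrame

variable {n m s : ℕ} {A : Matrix (Fin n) (Fin m) ℝ} {u w : ℝ}

theorem sq_le (hA : RestrictedFrame A s u w) (hu : 0 ≤ u) {z : Fin m → ℝ} (hz : l0norm z ≤ s) :
    u ^ 2 * (z ⬝ᵥ z) ≤ (A *ᵥ z) ⬝ᵥ (A *ᵥ z) ∧ (A *ᵥ z) ⬝ᵥ (A *ᵥ z) ≤ w ^ 2 * (z ⬝ᵥ z) := by
  obtain ⟨hl, hr⟩ := hA z hz
  rw [← l2norm_sq, ← l2norm_sq, ← mul_pow, ← mul_pow]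
  exact ⟨pow_le_pow_left₀ (mul_nonneg hu (l2norm_nonneg z)) hl 2,
    pow_le_pow_left₀ (l2norm_nonneg _) hr 2⟩

/-- Polarization: `4ab⟪Az₁, Az₂⟫ = ‖A(az₁ + bz₂)‖² - ‖A(az₁ - bz₂)‖²`. -/
theorem four_mul_mul_dotProduct_le (hA : RestrictedFrame A s u w) (hu : 0 ≤ u)
    {z₁ z₂ : Fin m → ℝ} (horth : z₁ ⬝ᵥ z₂ = 0) (hs : l0norm z₁ + l0norm z₂ ≤ s) (a b : ℝ) :
    4 * a * b * ((A *ᵥ z₁) ⬝ᵥ (A *ᵥ z₂)) ≤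
      (w ^ 2 - u ^ 2) * (a ^ 2 * (z₁ ⬝ᵥ z₁) + b ^ 2 * (z₂ ⬝ᵥ z₂)) := by
  have hplus := (hA.sq_le hu ((l0norm_smul_add_smul_le a b z₁ z₂).trans hs)).2
  have hminus := (hA.sq_le hu ((l0norm_smul_add_smul_le a (-b) z₁ z₂).trans hs)).1
  simp only [mulVec_add, mulVec_smul, dotProduct_add, add_dotProduct, dotProduct_smul,
    smul_dotProduct, smul_eq_mul, dotProduct_comm z₂ z₁, dotProduct_comm (A *ᵥ z₂) (A *ᵥ z₁),
    horth] at hplus hminus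
  linarith

theorem abs_dotProduct_le (hA : RestrictedFrame A s u w) (hu : 0 ≤ u) {z₁ z₂ : Fin m → ℝ}
    (hdisj : ∀ i, z₁ i = 0 ∨ z₂ i = 0) (hs : l0norm z₁ + l0norm z₂ ≤ s) :
    |(A *ᵥ z₁) ⬝ᵥ (A *ᵥ z₂)| ≤ (w ^ 2 - u ^ 2) / 2 * (l2norm z₁ * l2norm z₂) := by
  have key := hA.four_mul_mul_dotProduct_le hu (dotProduct_eq_zero_of_disjoint hdisj) hs
  simp only [← l2norm_sq] at key
  rcases (mul_nonneg (l2norm_nonneg z₁) (l2norm_nonneg z₂)).eq_or_lt with h0 | hpos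
  · rw [← h0, mul_zero]
    rcases mul_eq_zero.1 h0.symm with h | h <;> simp [l2norm_eq_zero.1 h]
  · have h₁ := key (l2norm z₂) (l2norm z₁)
    have h₂ := key (l2norm z₂) (-l2norm z₁)
    rw [abs_le]
    constructor <;> nlinarith

theorem abs_dotProduct_single_le (hA : RestrictedFrame A s u w) (hu : 0 ≤ u) {x : Fin m → ℝ}
    (hx : l0norm x < s) (i : Fin m) (c : ℝ) (hxi : x i = 0 ∨ c = 0) :
    |(A *ᵥ x) ⬝ᵥ (A *ᵥ Pi.single i c)| ≤ (w ^ 2 - u ^ 2) / 2 * (l2norm x * |c|) := by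
  rw [← l2norm_single i c]
  refine hA.abs_dotProduct_le hu (fun k => ?_) (by linarith [l0norm_single_le i c])
  rcases eq_or_ne k i with rfl | hk
  · simpa using hxi
  · simp [hk]

theorem sq_add_sq_le_of_mulVec_eq_zero (hA : RestrictedFrame A s u w) (hu : 0 ≤ u)
    {x₁ x₂ z : Fin m → ℝ} (hx : ∀ i, x₁ i = 0 ∨ x₂ i = 0) (hs : l0norm x₁ + l0norm x₂ ≤ s)
    (hs₁ : l0norm x₁ < s) (hs₂ : l0norm x₂ < s) (hz : ∀ i, z i = 0 ∨ x₁ i = 0 ∧ x₂ i = 0)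
    (hker : A *ᵥ (x₁ + x₂ + z) = 0) :
    u ^ 2 * (l2norm x₁ ^ 2 + l2norm x₂ ^ 2) ≤
      (w ^ 2 - u ^ 2) / 2 * (l2norm x₁ + l2norm x₂) * ∑ i, |z i| := by
  have horth := dotProduct_eq_zero_of_disjoint hx
  have hs' : l0norm (x₁ + x₂) ≤ s := by
    simpa using (l0norm_smul_add_smul_le 1 1 x₁ x₂).trans hs
  have hlow := (hA.sq_le hu hs').1
  have hAz : A *ᵥ (x₁ + x₂) = -(A *ᵥ z) := by
    rw [eq_neg_iff_add_eq_zero, ← mulVec_add, hker]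
  have hcross : ∀ i, -((A *ᵥ (x₁ + x₂)) ⬝ᵥ (A *ᵥ Pi.single i (z i))) ≤
      (w ^ 2 - u ^ 2) / 2 * (l2norm x₁ + l2norm x₂) * |z i| := by
    intro i
    have h₁ := hA.abs_dotProduct_single_le hu hs₁ i (z i) ((hz i).symm.imp_left And.left)
    have h₂ := hA.abs_dotProduct_single_le hu hs₂ i (z i) ((hz i).symm.imp_left And.right)
    rw [mulVec_add, add_dotProduct]
    linarith [neg_abs_le ((A *ᵥ x₁) ⬝ᵥ (A *ᵥ Pi.single i (z i))),
      neg_abs_le ((A *ᵥ x₂) ⬝ᵥ (A *ᵥ Pi.single i (z i)))]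
  calc u ^ 2 * (l2norm x₁ ^ 2 + l2norm x₂ ^ 2) = u ^ 2 * ((x₁ + x₂) ⬝ᵥ (x₁ + x₂)) := by
        rw [l2norm_sq, l2norm_sq, add_dotProduct, dotProduct_add, dotProduct_add,
          dotProduct_comm x₂ x₁, horth]
        ring
    _ ≤ (A *ᵥ (x₁ + x₂)) ⬝ᵥ (A *ᵥ (x₁ + x₂)) := hlow
    _ = -((A *ᵥ (x₁ + x₂)) ⬝ᵥ (A *ᵥ z)) := by
        nth_rewrite 2 [hAz]
        rw [dotProduct_neg]
    _ = ∑ i, -((A *ᵥ (x₁ + x₂)) ⬝ᵥ (A *ᵥ Pi.single i (z i))) := by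
        conv_lhs => rw [← univ_sum_single z]
        rw [mulVec_sum, dotProduct_sum, sum_neg_distrib]
    _ ≤ ∑ i, (w ^ 2 - u ^ 2) / 2 * (l2norm x₁ + l2norm x₂) * |z i| :=
        sum_le_sum fun i _ => hcross i
    _ = _ := (mul_sum _ _ _).symm

theorem l2norm_le_of_mulVec_eq_zero (hA : RestrictedFrame A s u w) (hu : 0 < u) (huw : u ≤ w)
    {x₁ x₂ z : Fin m → ℝ} (hx : ∀ i, x₁ i = 0 ∨ x₂ i = 0) (hs : l0norm x₁ + l0norm x₂ ≤ s)
    (hs₁ : l0norm x₁ < s) (hs₂ : l0norm x₂ < s) (hz : ∀ i, z i = 0 ∨ x₁ i = 0 ∧ x₂ i = 0)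
    (hker : A *ᵥ (x₁ + x₂ + z) = 0) :
    l2norm x₁ ≤ (√2 + 1) / 2 * ((w ^ 2 / u ^ 2 - 1) / 2 * ∑ i, |z i|) := by
  have h := hA.sq_add_sq_le_of_mulVec_eq_zero hu.le hx hs hs₁ hs₂ hz hker
  have hu2 : 0 < u ^ 2 := by positivity
  refine le_of_sq_add_sq_le_mul_add (y := l2norm x₂) ?_ ?_
  · have := one_le_sq_div_sq hu huw
    have : 0 ≤ ∑ i, |z i| := sum_nonneg fun i _ => abs_nonneg _
    positivity
  · have hrhs : u ^ 2 * ((w ^ 2 / u ^ 2 - 1) / 2 * (∑ i, |z i|) * (l2norm x₁ + l2norm x₂)) =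
        (w ^ 2 - u ^ 2) / 2 * (l2norm x₁ + l2norm x₂) * ∑ i, |z i| := by
      field_simp
    rw [← mul_le_mul_iff_right₀ hu2, hrhs]
    exact h

theorem abs_le_of_mulVec_eq_zero {t : ℕ} (hA : RestrictedFrame A (2 * t) u w) (hu : 0 < u)
    (huw : u ≤ w) (ht : 1 ≤ t) {v : Fin m → ℝ} (hv : A *ᵥ v = 0) {T S : Finset (Fin m)}
    (hT : T.card = t) (hS : S.card = t) (hTS : Disjoint T S) {μ : ℝ}
    (hμ : ∀ j, j ∉ T → j ∉ S → |v j| ≤ μ) {i : Fin m} (hi : i ∈ T) :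
    |v i| ≤ (√2 + 1) / 2 * ((w ^ 2 / u ^ 2 - 1) / 2 * (((m : ℝ) - 2 * t) * μ)) := by
  set x₁ := (T : Set (Fin m)).indicator v
  set x₂ := (S : Set (Fin m)).indicator v
  set z := ((T ∪ S : Finset (Fin m)) : Set (Fin m))ᶜ.indicator v
  have hx : ∀ j, x₁ j = 0 ∨ x₂ j = 0 := fun j => by
    by_cases hj : j ∈ T
    · simp [x₂, disjoint_left.1 hTS hj]
    · simp [x₁, hj]
  have hz : ∀ j, z j = 0 ∨ x₁ j = 0 ∧ x₂ j = 0 := fun j => by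
    by_cases hj : j ∈ T ∪ S
    · exact Or.inl (Set.indicator_of_notMem (Set.notMem_compl_iff.2 (mem_coe.2 hj)) v)
    · simp only [mem_union, not_or] at hj
      simp [x₁, x₂, hj]
  have hsplit : x₁ + x₂ + z = v := by
    funext j
    by_cases hjT : j ∈ T
    · simp [x₁, x₂, z, hjT, disjoint_left.1 hTS hjT]
    · by_cases hjS : j ∈ S <;> simp [x₁, x₂, z, hjT, hjS]
  have hx₁ : l0norm x₁ ≤ t := hT ▸ l0norm_indicator_le T v
  have hx₂ : l0norm x₂ ≤ t := hS ▸ l0norm_indicator_le S v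
  have hzsum : ∑ j, |z j| ≤ ((m : ℝ) - 2 * t) * μ := by
    have := sum_abs_indicator_compl_le (F := T ∪ S) fun j hj => by
      simp only [mem_union, not_or] at hj
      exact hμ j hj.1 hj.2
    rwa [card_union_of_disjoint hTS, hT, hS, Nat.cast_add, ← two_mul] at this
  have hlam : 0 ≤ (w ^ 2 / u ^ 2 - 1) / 2 := by linarith [one_le_sq_div_sq hu huw]
  calc |v i| = |x₁ i| := by simp [x₁, hi]
    _ ≤ l2norm x₁ := abs_le_l2norm x₁ i
    _ ≤ (√2 + 1) / 2 * ((w ^ 2 / u ^ 2 - 1) / 2 * ∑ j, |z j|) :=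
        hA.l2norm_le_of_mulVec_eq_zero hu huw hx (by omega) (by omega) (by omega) hz
          (by rw [hsplit, hv])
    _ ≤ _ := by gcongr

end RestrictedFrame

theorem exists_subset_card_eq_forall_le {α β : Type*} [DecidableEq α] [LinearOrder β]
    (f : α → β) (F : Finset α) {k : ℕ} (hk : k ≤ F.card) :
    ∃ S ⊆ F, S.card = k ∧ ∀ i ∈ F \ S, ∀ j ∈ S, f i ≤ f j := by
  induction k with
  | zero => exact ⟨∅, empty_subset F, card_empty, by simp⟩
  | succ k ih =>
    obtain ⟨S, hSF, hS, hdom⟩ := ih (by omega)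
    obtain ⟨a, ha, hmax⟩ := exists_max_image (F \ S) f
      (by rw [← card_pos, card_sdiff_of_subset hSF]; omega)
    have haS : a ∉ S := (mem_sdiff.1 ha).2
    refine ⟨insert a S, insert_subset (mem_sdiff.1 ha).1 hSF,
      by rw [card_insert_of_notMem haS, hS], fun i hi j hj => ?_⟩
    have hi' : i ∈ F \ S := by simp only [mem_sdiff, mem_insert, not_or] at hi ⊢; tauto
    rcases mem_insert.1 hj with rfl | hj
    · exact hmax i hi'
    · exact hdom i hi' j hj

/-- Beyond `T`, `S` carries the `t` largest entries of `v` in absolute value, and `a` the next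
one. -/
theorem exists_large_entries {ι : Type*} [Fintype ι] [DecidableEq ι] (v : ι → ℝ)
    (T : Finset ι) {t : ℕ} (h : t + 1 ≤ (univ.filter (v · ≠ 0) \ T).card) :
    ∃ (S : Finset ι) (a : ι), S.card = t ∧ a ∉ S ∧ Disjoint T (insert a S) ∧ 0 < |v a| ∧
      (∀ j ∈ insert a S, |v a| ≤ |v j|) ∧ ∀ j, j ∉ T → j ∉ S → |v j| ≤ |v a| := by
  set U := univ.filter (v · ≠ 0) \ T
  obtain ⟨S, hSU, hS, hdom⟩ := exists_subset_card_eq_forall_le (|v ·|) U (k := t) (by omega)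
  obtain ⟨a, ha, hmax⟩ := exists_max_image (U \ S) (|v ·|)
    (by rw [← card_pos, card_sdiff_of_subset hSU]; omega)
  obtain ⟨haU, haS⟩ := mem_sdiff.1 ha
  obtain ⟨ha0, haT⟩ := mem_sdiff.1 haU
  refine ⟨S, a, hS, haS, disjoint_insert_right.2 ⟨haT, disjoint_sdiff.mono_right hSU⟩,
    abs_pos.2 (mem_filter.1 ha0).2, fun j hj => ?_, fun j hjT hjS => ?_⟩
  · rcases mem_insert.1 hj with rfl | hj
    · exact le_rfl
    · exact hdom a ha j hj
  · by_cases hj : v j = 0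
    · simp [hj]
    · exact hmax j (by simp [U, hj, hjT, hjS])

theorem abs_rpow_le_abs_add_rpow_add_abs_rpow (a b : ℝ) {p : ℝ} (hp : 0 ≤ p) (hp1 : p ≤ 1) :
    |a| ^ p ≤ |a + b| ^ p + |b| ^ p :=
  calc |a| ^ p ≤ (|a + b| + |b|) ^ p := by
        gcongr
        simpa using abs_sub (a + b) b
    _ ≤ |a + b| ^ p + |b| ^ p := Real.rpow_add_le_add_rpow (abs_nonneg _) (abs_nonneg _) hp hp1

/-- Perturbing `x` by `v` costs at most `#T (Kμ)^p` in `‖·‖_p^p` on the support `T` of `x`, and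
gains at least `(#T + 1) μ^p` on `S`. -/
theorem sum_abs_rpow_lt_sum_abs_add_rpow {ι : Type*} [Fintype ι] {x v : ι → ℝ}
    {T S : Finset ι} {p K μ : ℝ} (hp : 0 < p) (hp1 : p ≤ 1) (hx : ∀ i ∉ T, x i = 0)
    (hTS : Disjoint T S) (hS : S.card = T.card + 1) (hμ : 0 < μ) (hK : 0 ≤ K)
    (hvT : ∀ i ∈ T, |v i| ≤ K * μ) (hvS : ∀ j ∈ S, μ ≤ |v j|)
    (hKp : T.card * K ^ p < T.card + 1) :
    ∑ i, |x i| ^ p < ∑ i, |x i + v i| ^ p := by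
  have hμp : 0 < μ ^ p := Real.rpow_pos_of_pos hμ p
  calc ∑ i, |x i| ^ p = ∑ i ∈ T, |x i| ^ p :=
        (sum_subset (subset_univ T) fun i _ hi => by simp [hx i hi, hp.ne']).symm
    _ ≤ ∑ i ∈ T, (|x i + v i| ^ p + |v i| ^ p) :=
        sum_le_sum fun i _ => abs_rpow_le_abs_add_rpow_add_abs_rpow _ _ hp.le hp1
    _ ≤ ∑ i ∈ T, |x i + v i| ^ p + T.card * (K ^ p * μ ^ p) := by
        rw [sum_add_distrib, ← Real.mul_rpow hK hμ.le, ← nsmul_eq_mul]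
        gcongr
        exact sum_le_card_nsmul _ _ _ fun i hi => by gcongr; exact hvT i hi
    _ < ∑ i ∈ T, |x i + v i| ^ p + S.card * μ ^ p := by
        rw [hS]
        push_cast
        nlinarith
    _ ≤ ∑ i ∈ T, |x i + v i| ^ p + ∑ i ∈ S, |x i + v i| ^ p := by
        rw [← nsmul_eq_mul]
        gcongr
        refine card_nsmul_le_sum _ _ _ fun j hj => ?_
        rw [hx j (disjoint_right.1 hTS hj), zero_add]
        gcongr
        exact hvS j hj
    _ ≤ ∑ i, |x i + v i| ^ p := by
        classical
        rw [← sum_union hTS]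
        exact sum_le_univ_sum_of_nonneg fun i => by positivity

theorem log_add_one_sub_log_le {a b : ℝ} (ha : 0 < a) (hab : a ≤ b) :
    Real.log (b + 1) - Real.log b ≤ Real.log (a + 1) - Real.log a := by
  have hb : 0 < b := ha.trans_le hab
  rw [← Real.log_div (by positivity) hb.ne', ← Real.log_div (by positivity) ha.ne']
  apply Real.log_le_log (by positivity)
  rw [div_le_div_iff₀ hb ha]
  linarith

theorem mul_rpow_lt_add_one {C t p : ℝ} (hC : 1 < C) (ht : 0 < t)
    (hp : p < (Real.log (t + 1) - Real.log t) / Real.log C) : t * C ^ p < t + 1 := by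
  rw [lt_div_iff₀ (Real.log_pos hC), ← Real.log_div (by positivity) ht.ne',
    Real.lt_log_iff_exp_lt (by positivity), mul_comm, ← Real.rpow_def_of_pos (by linarith),
    lt_div_iff₀ ht] at hp
  linarith

theorem mul_rpow_lt_add_one_of_lt_max {C p : ℝ} {t k₁ k₂ : ℕ} (hC : 1 < C) (ht : 1 ≤ t)
    (h₁ : t ≤ k₁) (h₂ : t ≤ k₂)
    (hp : p < max ((Real.log (k₁ + 1) - Real.log k₁) / Real.log C)
      ((Real.log (k₂ + 1) - Real.log k₂) / Real.log C)) :
    t * C ^ p < t + 1 := by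
  have hle : ∀ k : ℕ, t ≤ k → (Real.log (k + 1) - Real.log k) / Real.log C ≤
      (Real.log (t + 1) - Real.log t) / Real.log C := fun k hk =>
    div_le_div_of_nonneg_right (log_add_one_sub_log_le (by positivity) (by exact_mod_cast hk))
      (Real.log_pos hC).le
  exact mul_rpow_lt_add_one hC (by positivity) (hp.trans_le (max_le (hle k₁ h₁) (hle k₂ h₂)))

/-- The constant `C` of the threshold `p*`. -/
noncomputable def recoveryConst (lam : ℝ) (m : ℕ) : ℝ :=
  (√2 + 1) / 2 * ((lam - 1) * ((m : ℝ) - 3) / 2 + lam + √(1 / 2))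

theorem one_lt_recoveryConst {lam : ℝ} {m : ℕ} (hlam : 1 ≤ lam) (hm : 3 ≤ m) :
    1 < recoveryConst lam m := by
  have hm' : (3 : ℝ) ≤ m := by exact_mod_cast hm
  have h2 : 1 ≤ √2 := Real.one_le_sqrt.2 one_le_two
  have hhalf : 0 < √(1 / 2) := by positivity
  unfold recoveryConst
  nlinarith [mul_nonneg (sub_nonneg.2 hlam) (sub_nonneg.2 hm')]

theorem mul_le_recoveryConst_mul {lam μ : ℝ} {m t : ℕ} (hlam : 1 ≤ lam) (ht : 1 ≤ t)
    (hμ : 0 ≤ μ) :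
    (√2 + 1) / 2 * ((lam - 1) / 2 * (((m : ℝ) - 2 * t) * μ)) ≤ recoveryConst lam m * μ := by
  have ht' : (1 : ℝ) ≤ t := by exact_mod_cast ht
  have hcoef :
      (lam - 1) / 2 * ((m : ℝ) - 2 * t) ≤ (lam - 1) * ((m : ℝ) - 3) / 2 + lam + √(1 / 2) := by
    nlinarith [Real.sqrt_nonneg (1 / 2), mul_nonneg (sub_nonneg.2 hlam) (sub_nonneg.2 ht')]
  calc (√2 + 1) / 2 * ((lam - 1) / 2 * (((m : ℝ) - 2 * t) * μ))
      = (√2 + 1) / 2 * ((lam - 1) / 2 * ((m : ℝ) - 2 * t)) * μ := by ring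
    _ ≤ recoveryConst lam m * μ :=
        mul_le_mul_of_nonneg_right (mul_le_mul_of_nonneg_left hcoef (by positivity)) hμ

theorem stmt12_general (n m : ℕ) (A : Matrix (Fin n) (Fin m) ℝ)
    (hrank : IsUnit (A * A.transpose).det)
    (b : Fin n → ℝ) (xstar : Fin m → ℝ)
    (hxstar : A.mulVec xstar = b)
    (hmin : ∀ y : Fin m → ℝ, A.mulVec y = b → l0norm xstar ≤ l0norm y)
    (t : ℕ) (htdef : t = l0norm xstar) (ht : 1 ≤ t)
    (hker : ∀ x : Fin m → ℝ, x ≠ 0 → A.mulVec x = 0 → 2 * t + 1 ≤ l0norm x)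
    (u w : ℝ) (hu : 0 < u) (huw : u ≤ w)
    (hA : ∀ z : Fin m → ℝ, l0norm z ≤ 2 * t →
      u * l2norm z ≤ l2norm (A.mulVec z) ∧ l2norm (A.mulVec z) ≤ w * l2norm z)
    (lam C : ℝ) (hlam : lam = w ^ 2 / u ^ 2)
    (hC : C = (Real.sqrt 2 + 1) / 2 *
      ((lam - 1) * ((m : ℝ) - 3) / 2 + lam + Real.sqrt (1 / 2)))
    (h : ℝ → ℝ) (hh : ∀ x : ℝ, h x = (Real.log (x + 1) - Real.log x) / Real.log C)
    (Sstar : ℕ) (hSstar : Sstar = l0norm (A.transpose.mulVec ((A * A.transpose)⁻¹.mulVec b)))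
    (pstar : ℝ) (hpstar : pstar = max (h Sstar) (h ((2 * m - 5) / 4 + 1 : ℕ))) :
    ∀ p : ℝ, 0 < p → p < pstar → p ≤ 1 →
      ∀ y : Fin m → ℝ, A.mulVec y = b → y ≠ xstar →
        ∑ i, |xstar i| ^ p < ∑ i, |y i| ^ p := by
  intro p hp hpp hp1 y hy hne
  set v := y - xstar
  have hv : A *ᵥ v = 0 := by rw [mulVec_sub, hy, hxstar, sub_self]
  have hsupp := hker v (sub_ne_zero.2 hne) hv
  have hm := hsupp.trans (l0norm_le v)
  set T := univ.filter (xstar · ≠ 0)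
  have hT : T.card = t := htdef.symm
  obtain ⟨S, a, hS, haS, hTS, ha, hSa, hrest⟩ := exists_large_entries v T (t := t) (by
    have := le_card_sdiff T (univ.filter (v · ≠ 0))
    rw [l0norm] at hsupp
    omega)
  have hlam1 : 1 ≤ lam := hlam ▸ one_le_sq_div_sq hu huw
  have hC1 : 1 < C := hC ▸ one_lt_recoveryConst hlam1 (by omega)
  have hentry : ∀ i ∈ T, |v i| ≤ C * |v a| := fun i hi => by
    have := RestrictedFrame.abs_le_of_mulVec_eq_zero hA hu huw ht hv hT hS
      (disjoint_insert_right.1 hTS).2 hrest hi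
    rw [← hlam] at this
    rw [hC]
    exact this.trans (mul_le_recoveryConst_mul hlam1 ht (abs_nonneg _))
  have hfeas : A *ᵥ (Aᵀ *ᵥ ((A * Aᵀ)⁻¹ *ᵥ b)) = b := by
    rw [mulVec_mulVec, mulVec_mulVec, mul_nonsing_inv _ hrank, one_mulVec]
  -- `t ≤ ⌊(2m−5)/4⌋ + 1` because `2t + 1 ≤ m`.
  have hthr : t * C ^ p < t + 1 :=
    mul_rpow_lt_add_one_of_lt_max (k₂ := (2 * m - 5) / 4 + 1) hC1 ht
      (htdef ▸ hSstar ▸ hmin _ hfeas) (by omega)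
      (by simpa only [hpstar, hh] using hpp)
  have key := sum_abs_rpow_lt_sum_abs_add_rpow hp hp1 (x := xstar) (v := v)
    (fun i hi => by simpa [T] using hi) hTS (by rw [card_insert_of_notMem haS, hS, hT])
    ha (by linarith) hentry hSa (hT ▸ hthr)
  simpa [v] using key

/-- Theorem 4, main result: with `A` underdetermined of full row rank,
`x*` the unique `l₀`-minimizer of sparsity `t ≥ 1`, the null-space hypothesis
`‖x‖₀ ≥ 2t+1`, restricted frame constants `0 < u ≤ w` on `2t`-sparse vectors,
`λ = w²/u²`, `C = ((√2+1)/2)[(λ−1)(m−3)/2 + λ + √(1/2)]`,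
`h(x) = (ln(x+1) − ln x)/ln C`, `S* = ‖Aᵀ(AAᵀ)⁻¹b‖₀`, and
`p*(A,b) = max{h(S*), h(⌊(2m−5)/4⌋+1)}`:  for every `0 < p < p*(A,b)` with `p ≤ 1`,
`x*` is the unique minimizer of `‖·‖_p^p` over `{x | A x = b}`. -/
theorem stmt12 (n m : ℕ) (hnm : n < m) (A : Matrix (Fin n) (Fin m) ℝ)
    (hrank : IsUnit (A * A.transpose).det)
    (b : Fin n → ℝ) (xstar : Fin m → ℝ)
    (hxstar : A.mulVec xstar = b)
    (hmin : ∀ y : Fin m → ℝ, A.mulVec y = b → l0norm xstar ≤ l0norm y)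
    (t : ℕ) (htdef : t = l0norm xstar) (ht : 1 ≤ t)
    (hker : ∀ x : Fin m → ℝ, x ≠ 0 → A.mulVec x = 0 → 2 * t + 1 ≤ l0norm x)
    (u w : ℝ) (hu : 0 < u) (huw : u ≤ w)
    (hA : ∀ z : Fin m → ℝ, l0norm z ≤ 2 * t →
      u * l2norm z ≤ l2norm (A.mulVec z) ∧ l2norm (A.mulVec z) ≤ w * l2norm z)
    (lam C : ℝ) (hlam : lam = w ^ 2 / u ^ 2)
    (hC : C = (Real.sqrt 2 + 1) / 2 *
      ((lam - 1) * ((m : ℝ) - 3) / 2 + lam + Real.sqrt (1 / 2)))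
    (h : ℝ → ℝ) (hh : ∀ x : ℝ, h x = (Real.log (x + 1) - Real.log x) / Real.log C)
    (Sstar : ℕ) (hSstar : Sstar = l0norm (A.transpose.mulVec ((A * A.transpose)⁻¹.mulVec b)))
    (pstar : ℝ) (hpstar : pstar = max (h Sstar) (h ((2 * m - 5) / 4 + 1 : ℕ))) :
    ∀ p : ℝ, 0 < p → p < pstar → p ≤ 1 →
      ∀ y : Fin m → ℝ, A.mulVec y = b → y ≠ xstar →
        ∑ i, |xstar i| ^ p < ∑ i, |y i| ^ p :=
  stmt12_general n m A hrank b xstar hxstar hmin t htdef ht hker u w hu huw hA lam C hlam hC h hh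
    Sstar hSstar pstar hpstar
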